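/- For s ≥ 4 and n ≥ s, γ^{(s)}(n,0) = (s−2)·γ^{(s)}(n−1,0) + γ^{(s)}(n−1,1) − Σ_{j=3}^{s−1} r_j^{(s)}(n−1,0). -/

import Mathlib

open Finset Filter Topology

/-- Cells of a Young diagram given by its list of column lengths:
`(c, r)` means row `r` of column `c`. -/
def Cells (lam : List ℕ) : Set (ℕ × ℕ) :=
  {p | p.1 < lam.length ∧ p.2 < lam.getD p.1 0}

/-- `T` is a standard Young tableau of (column-lengths) shape `lam`:
it is a bijection from the cells onto `{1, …, lam.sum}`, strictly
increasing along each column and each row, and `0` outside the diagram. -/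
def IsSYT (lam : List ℕ) (T : ℕ × ℕ → ℕ) : Prop :=
  Set.BijOn T (Cells lam) (Set.Icc 1 lam.sum) ∧
  (∀ p ∈ Cells lam, ∀ q ∈ Cells lam, p.1 = q.1 → p.2 < q.2 → T p < T q) ∧
  (∀ p ∈ Cells lam, ∀ q ∈ Cells lam, p.2 = q.2 → p.1 < q.1 → T p < T q) ∧
  (∀ p, p ∉ Cells lam → T p = 0)

/-- The number of standard Young tableaux of a fixed column-shape. -/
noncomputable def sytCount (lam : List ℕ) : ℕ :=
  Nat.card {T : ℕ × ℕ → ℕ // IsSYT lam T}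

/-- Standard Young tableaux on `n` cells, with at most `s` columns
(column lengths positive and weakly decreasing), such that the difference
between the lengths of the second and third columns equals `i`. -/
def Y (s n i : ℕ) : Set (List ℕ × (ℕ × ℕ → ℕ)) :=
  {p | p.1.length ≤ s ∧ p.1.Pairwise (· ≥ ·) ∧ (∀ x ∈ p.1, 0 < x) ∧
       p.1.sum = n ∧ p.1.getD 1 0 - p.1.getD 2 0 = i ∧ IsSYT p.1 p.2}

/-- `gamma s n i = |Y s n i|`. -/
noncomputable def gamma (s n i : ℕ) : ℕ := Nat.card (Y s n i)

/-- `rj s j m i` : the number of standard Young tableaux on `m` cells with at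
most `s` columns whose second and third column lengths differ by `i`, and
whose `j`-th and `(j+1)`-th columns have the same length. -/
noncomputable def rj (s j m i : ℕ) : ℕ :=
  Nat.card {p : List ℕ × (ℕ × ℕ → ℕ) //
    p ∈ Y s m i ∧ p.1.getD (j - 1) 0 = p.1.getD j 0}

/-!
Remove the largest entry `n` from a tableau counted by `γ(n, 0)`. It sits at the bottom of a
column whose next column is strictly shorter, and what is left is a standard Young tableau on
`n - 1` cells; conversely a new largest entry can be put at the bottom of the first column or of
any column that is strictly shorter than the previous one. Since the second and third columns
have equal length, `n` is never at the bottom of the second column. If it is in the first column,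
the rest is counted by `γ(n - 1, 0)`; in the third column, by `γ(n - 1, 1)`; in the `(j + 1)`-th
column for `3 ≤ j ≤ s - 1`, the rest is a tableau of `γ(n - 1, 0)` whose `j`-th and `(j + 1)`-th
columns differ in length, and there are `γ(n - 1, 0) - r_j(n - 1, 0)` of those.
-/

open Function

def IsShape (lam : List ℕ) : Prop :=
  lam.Pairwise (· ≥ ·) ∧ ∀ x ∈ lam, 0 < x

namespace IsShape

lemma getD_le_getD {lam : List ℕ} (h : IsShape lam) {i j : ℕ} (hij : i ≤ j) :
    lam.getD j 0 ≤ lam.getD i 0 := by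
  rcases lt_or_ge j lam.length with hj | hj
  · rcases hij.lt_or_eq with hij | rfl
    · rw [List.getD_eq_getElem _ _ hj, List.getD_eq_getElem _ _ (hij.trans hj)]
      exact List.pairwise_iff_getElem.mp h.1 i j _ hj hij
    · rfl
  · rw [List.getD_eq_default _ _ hj]
    exact Nat.zero_le _

lemma getD_pos_iff {lam : List ℕ} (h : IsShape lam) {k : ℕ} :
    0 < lam.getD k 0 ↔ k < lam.length := by
  refine ⟨fun hk => ?_, fun hk => ?_⟩
  · by_contra hlen
    rw [List.getD_eq_default _ _ (not_lt.mp hlen)] at hk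
    exact hk.false
  · rw [List.getD_eq_getElem _ _ hk]
    exact h.2 _ (List.getElem_mem hk)

lemma ext {l₁ l₂ : List ℕ} (h₁ : IsShape l₁) (h₂ : IsShape l₂)
    (h : ∀ k, l₁.getD k 0 = l₂.getD k 0) : l₁ = l₂ := by
  have hlen : l₁.length = l₂.length := by
    refine le_antisymm (not_lt.mp fun hlt => ?_) (not_lt.mp fun hlt => ?_)
    · exact (h₂.getD_pos_iff.mp (h _ ▸ h₁.getD_pos_iff.mpr hlt)).false
    · exact (h₁.getD_pos_iff.mp ((h _).symm ▸ h₂.getD_pos_iff.mpr hlt)).false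
  refine List.ext_getElem hlen fun k hk₁ hk₂ => ?_
  rw [← List.getD_eq_getElem _ 0 hk₁, ← List.getD_eq_getElem _ 0 hk₂, h]

end IsShape

lemma getD_map_range (f : ℕ → ℕ) (L k : ℕ) :
    ((List.range L).map f).getD k 0 = if k < L then f k else 0 := by
  simp only [List.getD_eq_getElem?_getD, List.getElem?_map]
  split <;> simp_all

lemma sum_map_range (f : ℕ → ℕ) (L : ℕ) :
    ((List.range L).map f).sum = ∑ k ∈ range L, f k := by
  induction L with
  | zero => simp
  | succ L ih => simp [List.range_succ, Finset.sum_range_succ, ih]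

lemma sum_eq_sum_range_getD {lam : List ℕ} {L : ℕ} (h : lam.length ≤ L) :
    lam.sum = ∑ k ∈ range L, lam.getD k 0 := by
  have hlam : lam = (List.range lam.length).map (lam.getD · 0) :=
    List.ext_getElem (by simp) fun k hk _ => by
      rw [List.getElem_map, List.getElem_range, List.getD_eq_getElem _ _ hk]
  rw [hlam, sum_map_range, ← hlam]
  refine Finset.sum_subset (Finset.range_subset_range.mpr h) fun k _ hk => ?_
  exact List.getD_eq_default _ _ (by simpa using hk)

lemma isShape_map_range {f : ℕ → ℕ} {L : ℕ} (hf : Antitone f) (hpos : ∀ k < L, 0 < f k) :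
    IsShape ((List.range L).map f) :=
  ⟨List.pairwise_map.mpr (List.pairwise_lt_range.imp fun h => hf h.le),
    by simpa using hpos⟩

lemma mem_cells_iff {lam : List ℕ} {p : ℕ × ℕ} : p ∈ Cells lam ↔ p.2 < lam.getD p.1 0 := by
  refine ⟨And.right, fun h => ⟨?_, h⟩⟩
  by_contra hp
  rw [List.getD_eq_default _ _ (not_lt.mp hp)] at h
  exact Nat.not_lt_zero _ h

def IsAddable (lam : List ℕ) (c : ℕ) : Prop :=
  c = 0 ∨ lam.getD c 0 < lam.getD (c - 1) 0

def addCell (lam : List ℕ) (c : ℕ) : List ℕ :=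
  (List.range (max lam.length (c + 1))).map fun k => lam.getD k 0 + if k = c then 1 else 0

lemma getD_addCell (lam : List ℕ) (c k : ℕ) :
    (addCell lam c).getD k 0 = lam.getD k 0 + if k = c then 1 else 0 := by
  rw [addCell, getD_map_range]
  by_cases hk : k < max lam.length (c + 1)
  · rw [if_pos hk]
  · rw [if_neg hk, List.getD_eq_default _ _ (by omega), if_neg (by omega)]

lemma length_addCell (lam : List ℕ) (c : ℕ) :
    (addCell lam c).length = max lam.length (c + 1) := by
  simp [addCell]

lemma sum_addCell (lam : List ℕ) (c : ℕ) : (addCell lam c).sum = lam.sum + 1 := by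
  rw [addCell, sum_map_range, Finset.sum_add_distrib, ← sum_eq_sum_range_getD (le_max_left _ _),
    Finset.sum_ite_eq', if_pos (by simp)]

lemma cells_addCell (lam : List ℕ) (c : ℕ) :
    Cells (addCell lam c) = insert (c, lam.getD c 0) (Cells lam) := by
  ext ⟨a, b⟩
  rw [mem_cells_iff, Set.mem_insert_iff, mem_cells_iff, getD_addCell, Prod.mk.injEq]
  by_cases hac : a = c
  · subst hac
    simp only [if_true, true_and]
    omega
  · simp [hac]

lemma IsShape.addCell {lam : List ℕ} {c : ℕ} (h : IsShape lam) (hc : IsAddable lam c) :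
    IsShape (addCell lam c) := by
  refine isShape_map_range (antitone_nat_of_succ_le fun k => ?_) fun k hk => ?_
  · show lam.getD (k + 1) 0 + (if k + 1 = c then 1 else 0) ≤ lam.getD k 0 + if k = c then 1 else 0
    have := h.getD_le_getD (k.le_add_right 1)
    rcases eq_or_ne (k + 1) c with rfl | hk1
    · have : lam.getD (k + 1) 0 < lam.getD k 0 := hc.resolve_left k.succ_ne_zero
      rw [if_pos rfl, if_neg (by omega)]
      omega
    · rw [if_neg hk1]
      split_ifs <;> omega
  · show 0 < lam.getD k 0 + if k = c then 1 else 0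
    rcases eq_or_ne k c with rfl | hkc
    · rw [if_pos rfl]
      omega
    · rw [if_neg hkc, add_zero, h.getD_pos_iff]
      rcases hc with rfl | hc
      · omega
      · have := h.getD_pos_iff.mp (Nat.zero_lt_of_lt hc)
        omega

lemma eq_of_addCell_eq {l₁ l₂ : List ℕ} {c : ℕ} (h₁ : IsShape l₁) (h₂ : IsShape l₂)
    (h : addCell l₁ c = addCell l₂ c) : l₁ = l₂ :=
  h₁.ext h₂ fun k => by
    have := congrArg (·.getD k 0) h
    simp only [getD_addCell] at this
    omega

-- A corner column of length 1 is the last column, and it disappears.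
def removeCell (mu : List ℕ) (c : ℕ) : List ℕ :=
  (List.range (if mu.getD c 0 = 1 then c else mu.length)).map
    fun k => mu.getD k 0 - if k = c then 1 else 0

section removeCell

variable {mu : List ℕ} {c : ℕ}

lemma getD_removeCell (h : IsShape mu) (hc : mu.getD (c + 1) 0 < mu.getD c 0) (k : ℕ) :
    (removeCell mu c).getD k 0 = mu.getD k 0 - if k = c then 1 else 0 := by
  rw [removeCell, getD_map_range]
  by_cases hk : k < if mu.getD c 0 = 1 then c else mu.length
  · rw [if_pos hk]
  · rw [if_neg hk]
    have hclen : c < mu.length := h.getD_pos_iff.mp (Nat.zero_lt_of_lt hc)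
    split_ifs at hk with h1
    · rcases (not_lt.mp hk).lt_or_eq with hck | rfl
      · have := h.getD_le_getD (show c + 1 ≤ k from hck)
        rw [if_neg hck.ne', Nat.sub_zero]
        omega
      · rw [if_pos rfl]
        omega
    · rw [List.getD_eq_default _ _ (not_lt.mp hk), if_neg (by omega)]

lemma IsShape.removeCell (h : IsShape mu) (hc : mu.getD (c + 1) 0 < mu.getD c 0) :
    IsShape (removeCell mu c) := by
  refine isShape_map_range (antitone_nat_of_succ_le fun k => ?_) fun k hk => ?_
  · show mu.getD (k + 1) 0 - (if k + 1 = c then 1 else 0) ≤ mu.getD k 0 - if k = c then 1 else 0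
    have := h.getD_le_getD (k.le_add_right 1)
    rcases eq_or_ne k c with rfl | hkc
    · rw [if_pos rfl, if_neg (by omega)]
      omega
    · rw [if_neg hkc]
      split_ifs <;> omega
  · show 0 < mu.getD k 0 - if k = c then 1 else 0
    split_ifs at hk with h1
    · have := h.getD_le_getD hk.le
      rw [if_neg hk.ne]
      omega
    · have := h.getD_pos_iff.mpr hk
      rcases eq_or_ne k c with rfl | hkc
      · rw [if_pos rfl]
        omega
      · rw [if_neg hkc]
        omega

lemma isAddable_removeCell (h : IsShape mu) (hc : mu.getD (c + 1) 0 < mu.getD c 0) :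
    IsAddable (removeCell mu c) c := by
  refine (eq_or_ne c 0).imp id fun hc0 => ?_
  have := h.getD_le_getD (Nat.sub_le c 1)
  rw [getD_removeCell h hc, getD_removeCell h hc, if_pos rfl, if_neg (by omega)]
  omega

lemma addCell_removeCell (h : IsShape mu) (hc : mu.getD (c + 1) 0 < mu.getD c 0) :
    addCell (removeCell mu c) c = mu := by
  refine ((h.removeCell hc).addCell (isAddable_removeCell h hc)).ext h fun k => ?_
  rw [getD_addCell, getD_removeCell h hc]
  split_ifs with hkc
  · subst hkc
    omega
  · omega

end removeCell

lemma update_insert_lt_iff {α : Type*} [DecidableEq α] {C : Set α} {q : α} {T : α → ℕ} {m : ℕ}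
    {R : α → α → Prop} (hq : q ∉ C) (hirr : ¬R q q) (hout : ∀ p ∈ C, ¬R q p)
    (hle : ∀ p ∈ C, T p ≤ m) :
    (∀ p ∈ insert q C, ∀ p' ∈ insert q C, R p p' → update T q (m + 1) p < update T q (m + 1) p') ↔
      ∀ p ∈ C, ∀ p' ∈ C, R p p' → T p < T p' := by
  have heq : ∀ p ∈ C, update T q (m + 1) p = T p := fun p hp =>
    update_of_ne (ne_of_mem_of_not_mem hp hq) _ _
  refine ⟨fun h p hp p' hp' hR => ?_, ?_⟩
  · simpa only [heq p hp, heq p' hp'] using h p (.inr hp) p' (.inr hp') hR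
  · rintro h p (rfl | hp) p' (rfl | hp') hR
    · exact absurd hR hirr
    · exact absurd hR (hout p' hp')
    · rw [heq p hp, update_self]
      exact Nat.lt_succ_of_le (hle p hp)
    · rw [heq p hp, heq p' hp']
      exact h p hp p' hp' hR

lemma notMem_cells_getD (lam : List ℕ) (c : ℕ) : (c, lam.getD c 0) ∉ Cells lam := fun h =>
  lt_irrefl _ (mem_cells_iff.mp h)

theorem isSYT_addCell_iff {lam : List ℕ} {T : ℕ × ℕ → ℕ} {c : ℕ} (hlam : IsShape lam)
    (hT : T (c, lam.getD c 0) = 0) :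
    IsSYT (addCell lam c) (update T (c, lam.getD c 0) (lam.sum + 1)) ↔ IsSYT lam T := by
  have hq := notMem_cells_getD lam c
  have hbij := Set.BijOn.insert_iff (f := update T (c, lam.getD c 0) (lam.sum + 1)) hq
    (t := Set.Icc 1 lam.sum) (by simp)
  rw [update_self, Set.insert_Icc_right_eq_Icc_add_one (Nat.le_add_left 1 _),
    (Set.EqOn.bijOn_iff fun p hp => update_of_ne (ne_of_mem_of_not_mem hp hq) _ _)] at hbij
  unfold IsSYT
  rw [cells_addCell, sum_addCell, hbij]
  refine and_congr_right fun hbijT => ?_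
  have hle : ∀ p ∈ Cells lam, T p ≤ lam.sum := fun p hp => (hbijT.mapsTo hp).2
  -- No cell of `lam` lies below the new cell in its column or to its right in its row.
  have hcol := update_insert_lt_iff (R := fun p p' => p.1 = p'.1 ∧ p.2 < p'.2) hq (by simp)
    (fun p hp ⟨h1, h2⟩ => by
      dsimp only at h1 h2
      rw [mem_cells_iff, ← h1] at hp
      omega) hle
  have hrow := update_insert_lt_iff (R := fun p p' => p.2 = p'.2 ∧ p.1 < p'.1) hq (by simp)
    (fun p hp ⟨h1, h2⟩ => by
      dsimp only at h1 h2
      have := hlam.getD_le_getD h2.le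
      rw [mem_cells_iff] at hp
      omega) hle
  simp only [and_imp] at hcol hrow
  rw [hcol, hrow]
  refine and_congr_right fun _ => and_congr_right fun _ => forall_congr' fun p => ?_
  by_cases hpq : p = (c, lam.getD c 0)
  · subst hpq
    exact iff_of_true (fun h => (h (Set.mem_insert _ _)).elim) fun _ => hT
  · rw [Set.mem_insert_iff, update_of_ne hpq]
    simp only [not_or, hpq, not_false_eq_true, true_and]

namespace IsSYT

variable {mu : List ℕ} {U : ℕ × ℕ → ℕ} {q : ℕ × ℕ}

lemma le_sum (hU : IsSYT mu U) (p : ℕ × ℕ) : U p ≤ mu.sum := by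
  by_cases hp : p ∈ Cells mu
  · exact (hU.1.mapsTo hp).2
  · rw [hU.2.2.2 p hp]
    exact Nat.zero_le _

lemma getD_eq_succ_of_eq_sum (hU : IsSYT mu U) (hq : q ∈ Cells mu) (hqv : U q = mu.sum) :
    mu.getD q.1 0 = q.2 + 1 := by
  refine le_antisymm (not_lt.mp fun hlt => ?_) (mem_cells_iff.mp hq)
  have hbelow : (q.1, q.2 + 1) ∈ Cells mu := mem_cells_iff.mpr hlt
  have := hU.2.1 q hq _ hbelow rfl (Nat.lt_succ_self _)
  have := hU.le_sum (q.1, q.2 + 1)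
  omega

lemma getD_succ_lt_of_eq_sum (hmu : IsShape mu) (hU : IsSYT mu U) (hq : q ∈ Cells mu)
    (hqv : U q = mu.sum) : mu.getD (q.1 + 1) 0 < mu.getD q.1 0 := by
  refine lt_of_le_of_ne (hmu.getD_le_getD (Nat.le_succ _)) fun heq => ?_
  have hright : (q.1 + 1, q.2) ∈ Cells mu := mem_cells_iff.mpr (heq ▸ mem_cells_iff.mp hq)
  have := hU.2.2.1 q hq _ hright rfl (Nat.lt_succ_self _)
  have := hU.le_sum (q.1 + 1, q.2)
  omega

end IsSYT

def growDomain : Set (ℕ × (List ℕ × (ℕ × ℕ → ℕ))) :=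
  {x | IsShape x.2.1 ∧ IsAddable x.2.1 x.1 ∧ IsSYT x.2.1 x.2.2}

def grow (x : ℕ × (List ℕ × (ℕ × ℕ → ℕ))) : List ℕ × (ℕ × ℕ → ℕ) :=
  (addCell x.2.1 x.1, update x.2.2 (x.1, x.2.1.getD x.1 0) (x.2.1.sum + 1))

lemma IsSYT.grow {c : ℕ} {lam : List ℕ} {T : ℕ × ℕ → ℕ} (hlam : IsShape lam)
    (hT : IsSYT lam T) : IsSYT (grow (c, lam, T)).1 (grow (c, lam, T)).2 :=
  (isSYT_addCell_iff hlam (hT.2.2.2 _ (notMem_cells_getD lam c))).mpr hT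

theorem bijOn_grow :
    Set.BijOn grow growDomain {y | IsShape y.1 ∧ 0 < y.1.sum ∧ IsSYT y.1 y.2} := by
  refine ⟨?_, ?_, ?_⟩
  · rintro ⟨c, lam, T⟩ ⟨hlam, hc, hT⟩
    exact ⟨hlam.addCell hc, (sum_addCell lam c).symm ▸ Nat.succ_pos _, hT.grow hlam⟩
  · rintro ⟨c, lam, T⟩ ⟨hlam, -, hT⟩ ⟨c', lam', T'⟩ ⟨hlam', -, hT'⟩ h
    obtain ⟨hshape, hfun⟩ := Prod.ext_iff.mp h
    dsimp only [grow] at hshape hfun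
    have hsum : lam.sum = lam'.sum := by
      simpa only [sum_addCell, Nat.add_right_cancel_iff] using congrArg List.sum hshape
    have hcell : (c, lam.getD c 0) = (c', lam'.getD c' 0) := by
      refine (hT.grow hlam (c := c)).1.injOn (by simp [grow, cells_addCell])
        (by simp only [grow, hshape, cells_addCell, Set.mem_insert_iff, true_or]) ?_
      show update T _ (lam.sum + 1) _ = update T _ (lam.sum + 1) (c', lam'.getD c' 0)
      rw [update_self, hfun, update_self, hsum]
    obtain rfl : c = c' := congrArg Prod.fst hcell
    obtain rfl : lam = lam' := eq_of_addCell_eq hlam hlam' hshape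
    refine Prod.ext rfl (Prod.ext rfl (funext fun p => ?_))
    by_cases hp : p = (c, lam.getD c 0)
    · rw [hp, hT.2.2.2 _ (notMem_cells_getD lam c), hT'.2.2.2 _ (notMem_cells_getD lam c)]
    · simpa only [update_of_ne hp] using congrFun hfun p
  · rintro ⟨mu, U⟩ ⟨hmu, hpos, hU⟩
    obtain ⟨q, hq, hqv⟩ := hU.1.surjOn (Set.mem_Icc.mpr ⟨hpos, le_rfl⟩)
    have hcorner := hU.getD_succ_lt_of_eq_sum hmu hq hqv
    have hadd := addCell_removeCell hmu hcorner
    have hcell : (q.1, (removeCell mu q.1).getD q.1 0) = q := by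
      rw [getD_removeCell hmu hcorner, if_pos rfl, hU.getD_eq_succ_of_eq_sum hq hqv,
        Nat.add_sub_cancel]
    have hsum : (removeCell mu q.1).sum + 1 = mu.sum := by
      rw [← sum_addCell, hadd]
    have hgrow : grow (q.1, removeCell mu q.1, update U q 0) = (mu, U) := by
      simp only [grow, hadd, hcell, update_idem, hsum, ← hqv, update_eq_self]
    refine ⟨(q.1, removeCell mu q.1, update U q 0), ⟨hmu.removeCell hcorner,
      isAddable_removeCell hmu hcorner, ?_⟩, hgrow⟩
    refine (isSYT_addCell_iff (c := q.1) (hmu.removeCell hcorner) ?_).mp ?_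
    · show update U q 0 _ = 0
      rw [hcell, update_self]
    · rw [← hgrow] at hU
      exact hU

lemma mem_Y_iff {s n i : ℕ} {lam : List ℕ} {T : ℕ × ℕ → ℕ} :
    (lam, T) ∈ Y s n i ↔ lam.length ≤ s ∧ IsShape lam ∧ lam.sum = n ∧
      lam.getD 1 0 - lam.getD 2 0 = i ∧ IsSYT lam T :=
  ⟨fun ⟨h₁, h₂, h₃, h₄, h₅, h₆⟩ => ⟨h₁, ⟨h₂, h₃⟩, h₄, h₅, h₆⟩,
    fun ⟨h₁, ⟨h₂, h₃⟩, h₄, h₅, h₆⟩ => ⟨h₁, h₂, h₃, h₄, h₅, h₆⟩⟩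

lemma getD_le_sum (lam : List ℕ) (k : ℕ) : lam.getD k 0 ≤ lam.sum := by
  rcases lt_or_ge k lam.length with hk | hk
  · rw [List.getD_eq_getElem _ _ hk]
    exact List.le_sum_of_mem (List.getElem_mem hk)
  · rw [List.getD_eq_default _ _ hk]
    exact Nat.zero_le _

lemma finite_Y (s m i : ℕ) : (Y s m i).Finite := by
  -- A tableau in `Y s m i` is determined by its column lengths and its entries in the box `s × m`.
  let restrict (p : List ℕ × (ℕ × ℕ → ℕ)) : (Fin s → ℕ) × (Fin s × Fin m → ℕ) :=
    (fun k => p.1.getD k 0, fun q => p.2 (q.1, q.2))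
  have hbounded : (Set.univ.pi fun _ : Fin s => Set.Iic m) ×ˢ
      (Set.univ.pi fun _ : Fin s × Fin m => Set.Iic m) |>.Finite :=
    (Set.Finite.pi fun _ => Set.finite_Iic m).prod (Set.Finite.pi fun _ => Set.finite_Iic m)
  refine Set.Finite.of_finite_image (f := restrict) (hbounded.subset ?_) ?_
  · rintro _ ⟨⟨lam, T⟩, hp, rfl⟩
    obtain ⟨-, -, hsum, -, hT⟩ := mem_Y_iff.mp hp
    exact ⟨fun k _ => hsum ▸ getD_le_sum lam k, fun q _ => hsum ▸ hT.le_sum _⟩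
  · rintro ⟨lam, T⟩ hp ⟨lam', T'⟩ hp' h
    obtain ⟨hlen, hlam, hsum, -, hT⟩ := mem_Y_iff.mp hp
    obtain ⟨hlen', hlam', -, -, hT'⟩ := mem_Y_iff.mp hp'
    obtain ⟨h₁, h₂⟩ := Prod.ext_iff.mp h
    obtain rfl : lam = lam' := hlam.ext hlam' fun k => by
      by_cases hk : k < s
      · exact congrFun h₁ ⟨k, hk⟩
      · rw [List.getD_eq_default _ _ (by omega), List.getD_eq_default _ _ (by omega)]
    refine Prod.ext rfl (funext fun q => ?_)
    by_cases hq : q ∈ Cells lam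
    · have hcol : q.1 < s := lt_of_lt_of_le hq.1 hlen
      have hrow : q.2 < m := hsum ▸ lt_of_lt_of_le (mem_cells_iff.mp hq) (getD_le_sum lam _)
      exact congrFun h₂ (⟨q.1, hcol⟩, ⟨q.2, hrow⟩)
    · exact (hT.2.2.2 q hq).trans (hT'.2.2.2 q hq).symm

lemma ncard_eq_sum_ncard_fiber {ι X : Type*} {S : Set (ι × X)} (hS : S.Finite) {I : Finset ι}
    (hI : ∀ x ∈ S, x.1 ∈ I) : S.ncard = ∑ i ∈ I, {x | (i, x) ∈ S}.ncard := by
  have hS_eq : S = ⋃ i ∈ (I : Set ι), Prod.mk i '' {x | (i, x) ∈ S} := by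
    ext ⟨i, x⟩
    simp only [Set.mem_iUnion, Set.mem_image, Set.mem_ofPred_eq, Prod.mk.injEq, Finset.mem_coe]
    exact ⟨fun h => ⟨i, hI _ h, x, h, rfl, rfl⟩, by rintro ⟨j, -, y, hy, rfl, rfl⟩; exact hy⟩
  nth_rw 1 [hS_eq]
  rw [Set.Finite.ncard_biUnion I.finite_toSet, finsum_mem_coe_finset]
  · exact Finset.sum_congr rfl fun i _ => Set.ncard_image_of_injective _ (Prod.mk_right_injective i)
  · exact fun i _ => (hS.preimage (Prod.mk_right_injective i).injOn).image _
  · refine fun i _ j _ hij => Set.disjoint_left.mpr ?_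
    rintro _ ⟨x, -, rfl⟩ ⟨y, -, h⟩
    exact hij (congrArg Prod.fst h).symm

lemma image_grow_inter_preimage_Y {s n : ℕ} (i : ℕ) (hn : n ≠ 0) :
    grow '' (growDomain ∩ grow ⁻¹' Y s n i) = Y s n i := by
  rw [Set.image_inter_preimage, bijOn_grow.image_eq, Set.inter_eq_right]
  rintro ⟨mu, U⟩ hp
  obtain ⟨-, hmu, hsum, -, hU⟩ := mem_Y_iff.mp hp
  exact ⟨hmu, Nat.pos_of_ne_zero (hsum ▸ hn), hU⟩

lemma mem_growDomain_inter_iff {s n c : ℕ} {lam : List ℕ} {T : ℕ × ℕ → ℕ} :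
    (c, lam, T) ∈ growDomain ∩ grow ⁻¹' Y s n 0 ↔
      (lam.length ≤ s ∧ IsShape lam ∧ lam.sum + 1 = n ∧ IsSYT lam T) ∧ c < s ∧
        IsAddable lam c ∧ (addCell lam c).getD 1 0 ≤ (addCell lam c).getD 2 0 := by
  rw [Set.mem_inter_iff, Set.mem_preimage]
  dsimp only [grow]
  rw [mem_Y_iff, length_addCell, sum_addCell]
  constructor
  · rintro ⟨⟨hlam, hc, hT⟩, hlen, -, hsum, hdiff, -⟩
    exact ⟨⟨by omega, hlam, hsum, hT⟩, by omega, hc, by omega⟩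
  · rintro ⟨⟨hlen, hlam, hsum, hT⟩, hcs, hc, hdiff⟩
    exact ⟨⟨hlam, hc, hT⟩, by omega, hlam.addCell hc, hsum, by omega, hT.grow hlam⟩

def growFiber (s n c : ℕ) : Set (List ℕ × (ℕ × ℕ → ℕ)) :=
  {p | (c, p) ∈ growDomain ∩ grow ⁻¹' Y s n 0}

lemma gamma_eq_ncard (s n i : ℕ) : gamma s n i = (Y s n i).ncard :=
  Nat.card_coe_set_eq _

lemma gamma_eq_sum_ncard_growFiber {s n : ℕ} (hn : n ≠ 0) {I : Finset ℕ} (hI : ∀ c < s, c ∈ I) :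
    gamma s n 0 = ∑ c ∈ I, (growFiber s n c).ncard := by
  have hinj := bijOn_grow.injOn.mono (Set.inter_subset_left (t := grow ⁻¹' Y s n 0))
  have himage := image_grow_inter_preimage_Y (s := s) 0 hn
  rw [gamma_eq_ncard, ← himage, hinj.ncard_image]
  refine ncard_eq_sum_ncard_fiber (Set.Finite.of_finite_image
    (by rw [himage]; exact finite_Y s n 0) hinj) ?_
  rintro ⟨c, lam, T⟩ hx
  exact hI c (mem_growDomain_inter_iff.mp hx).2.1

section growFiber

variable {s n : ℕ}

lemma growFiber_zero (hs : 1 ≤ s) (hn : n ≠ 0) : growFiber s n 0 = Y s (n - 1) 0 := by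
  ext ⟨lam, T⟩
  rw [growFiber, Set.mem_ofPred_eq, mem_growDomain_inter_iff, getD_addCell, getD_addCell,
    if_neg one_ne_zero, if_neg two_ne_zero, mem_Y_iff]
  constructor
  · rintro ⟨⟨hlen, hlam, hsum, hT⟩, -, -, hdiff⟩
    exact ⟨hlen, hlam, by omega, by omega, hT⟩
  · rintro ⟨hlen, hlam, hsum, hdiff, hT⟩
    exact ⟨⟨hlen, hlam, by omega, hT⟩, by omega, .inl rfl, by omega⟩

lemma growFiber_one : growFiber s n 1 = ∅ := by
  refine Set.eq_empty_of_forall_notMem fun ⟨lam, T⟩ h => ?_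
  obtain ⟨⟨-, hlam, -, -⟩, -, -, hdiff⟩ := mem_growDomain_inter_iff.mp h
  rw [getD_addCell, getD_addCell, if_pos rfl, if_neg (by decide)] at hdiff
  have := hlam.getD_le_getD one_le_two
  omega

lemma growFiber_two (hs : 3 ≤ s) (hn : n ≠ 0) : growFiber s n 2 = Y s (n - 1) 1 := by
  ext ⟨lam, T⟩
  rw [growFiber, Set.mem_ofPred_eq, mem_growDomain_inter_iff, getD_addCell, getD_addCell,
    if_neg (by decide), if_pos rfl, mem_Y_iff]
  constructor
  · rintro ⟨⟨hlen, hlam, hsum, hT⟩, -, hc, hdiff⟩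
    have hc : lam.getD 2 0 < lam.getD 1 0 := hc.resolve_left two_ne_zero
    exact ⟨hlen, hlam, by omega, by omega, hT⟩
  · rintro ⟨hlen, hlam, hsum, hdiff, hT⟩
    exact ⟨⟨hlen, hlam, by omega, hT⟩, by omega, .inr (by show _ < lam.getD 1 0; omega),
      by omega⟩

lemma growFiber_of_three_le {c : ℕ} (hc : 3 ≤ c) (hcs : c < s) (hn : n ≠ 0) :
    growFiber s n c = Y s (n - 1) 0 ∩ {p | p.1.getD c 0 < p.1.getD (c - 1) 0} := by
  ext ⟨lam, T⟩
  rw [growFiber, Set.mem_ofPred_eq, mem_growDomain_inter_iff, getD_addCell, getD_addCell,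
    if_neg (by omega), if_neg (by omega), Set.mem_inter_iff, mem_Y_iff, Set.mem_ofPred_eq]
  constructor
  · rintro ⟨⟨hlen, hlam, hsum, hT⟩, -, hadd, hdiff⟩
    exact ⟨⟨hlen, hlam, by omega, by omega, hT⟩, hadd.resolve_left (by omega)⟩
  · rintro ⟨⟨hlen, hlam, hsum, hdiff, hT⟩, hadd⟩
    exact ⟨⟨hlen, hlam, by omega, hT⟩, hcs, .inr hadd, by omega⟩

lemma ncard_growFiber_add_rj {c : ℕ} (hc : 3 ≤ c) (hcs : c < s) (hn : n ≠ 0) :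
    (growFiber s n c).ncard + rj s c (n - 1) 0 = gamma s (n - 1) 0 := by
  have hrj : rj s c (n - 1) 0 =
      (Y s (n - 1) 0 \ {p | p.1.getD c 0 < p.1.getD (c - 1) 0}).ncard := by
    rw [rj, ← Nat.card_coe_set_eq]
    refine Nat.card_congr (Equiv.subtypeEquivRight fun p => and_congr_right fun hp => ?_)
    have := IsShape.getD_le_getD ⟨hp.2.1, hp.2.2.1⟩ (Nat.sub_le c 1)
    simp only [Set.mem_ofPred_eq]
    omega
  rw [growFiber_of_three_le hc hcs hn, hrj, gamma_eq_ncard,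
    Set.ncard_inter_add_ncard_sdiff_eq_ncard _ _ (finite_Y _ _ _)]

end growFiber

theorem stmt13 (s n : ℕ) (hs : 4 ≤ s) (hn : s ≤ n) :
    gamma s n 0 + (∑ j ∈ Finset.Icc 3 (s - 1), rj s j (n - 1) 0) =
      (s - 2) * gamma s (n - 1) 0 + gamma s (n - 1) 1 := by
  have hn0 : n ≠ 0 := by omega
  have hsplit : gamma s n 0 = gamma s (n - 1) 0 + gamma s (n - 1) 1 +
      ∑ c ∈ Icc 3 (s - 1), (growFiber s n c).ncard := by
    rw [gamma_eq_sum_ncard_growFiber (s := s) hn0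
      (I := insert 0 (insert 1 (insert 2 (Icc 3 (s - 1)))))
      fun c hc => by simp only [Finset.mem_insert, Finset.mem_Icc]; omega,
      Finset.sum_insert (by simp), Finset.sum_insert (by simp), Finset.sum_insert (by simp),
      growFiber_zero (by omega) hn0, growFiber_one, growFiber_two (by omega) hn0,
      Set.ncard_empty, gamma_eq_ncard, gamma_eq_ncard]
    ring
  have hrest : ∑ c ∈ Icc 3 (s - 1), (growFiber s n c).ncard +
      ∑ j ∈ Icc 3 (s - 1), rj s j (n - 1) 0 = (s - 3) * gamma s (n - 1) 0 := by
    rw [← Finset.sum_add_distrib, Finset.sum_congr rfl fun c hc => by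
      obtain ⟨h3, hcs⟩ := Finset.mem_Icc.mp hc
      exact ncard_growFiber_add_rj h3 (by omega) hn0, Finset.sum_const, Nat.card_Icc, smul_eq_mul,
      show s - 1 + 1 - 3 = s - 3 by omega]
  rw [hsplit, show s - 2 = s - 3 + 1 by omega, add_mul, one_mul, ← hrest]
  ring
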